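/- Let f : ℝ^n → ℝ be continuous with f(z) = -Q(z) + O(|z|³) near 0, where Q(z) = ∑_{i=1}^l λ_i²(z_{2i-1}² + z_{2i}²) with all λ_i ≠ 0 and n = 2l. Suppose g : ℝ^n → ℝ is continuous with g(0) = c. Then lim_{R→∞} ∫_{|z_i| ≤ ε√R} exp(R·f(z/√R)) g(z/√R) dz = c · ∫_{ℝ^n} exp(-Q(z)) dz, provided there is a constant κ > 0 with R·f(z/√R) ≤ -κ|z|² for all |z_i| ≤ ε√R and R ≥ 1. -/

import Mathlib

/-!
Substituting `z ↦ z / √R` and using that `Q` is homogeneous of degree two, the exponent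
`R f(z/√R)` differs from `-Q z` by `O(|z|³/√R)`, so the integrand converges pointwise to
`exp(-Q z) g(0)`. The cubes exhaust `ℝⁿ`, and the hypothesis `R f(z/√R) ≤ -κ|z|²` together
with the boundedness of `g` on the `ε`-cube gives the integrable Gaussian majorant
`M exp(-κ|z|²)`, so dominated convergence applies.
-/

open MeasureTheory Real Filter Topology

theorem tendsto_setIntegral_of_dominated_of_eventually_mem {α ι : Type*} [MeasurableSpace α]
    {μ : Measure α} {l : Filter ι} [l.IsCountablyGenerated] {S : ι → Set α}
    {F : ι → α → ℝ} {φ bound : α → ℝ} (hS : ∀ n, MeasurableSet (S n))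
    (hF_meas : ∀ n, AEStronglyMeasurable (F n) μ)
    (h_bound : ∀ᶠ n in l, ∀ a ∈ S n, ‖F n a‖ ≤ bound a) (bound_integrable : Integrable bound μ)
    (h_mem : ∀ a, ∀ᶠ n in l, a ∈ S n) (h_lim : ∀ a, Tendsto (F · a) l (𝓝 (φ a))) :
    Tendsto (fun n => ∫ a in S n, F n a ∂μ) l (𝓝 (∫ a, φ a ∂μ)) := by
  simp_rw [← integral_indicator (hS _)]
  refine tendsto_integral_filter_of_dominated_convergence (‖bound ·‖)
    (.of_forall fun n => (hF_meas n).indicator (hS n)) ?_ bound_integrable.norm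
    (.of_forall fun a => (h_lim a).congr' ?_)
  · filter_upwards [h_bound] with n hn
    refine .of_forall fun a => ?_
    by_cases ha : a ∈ S n
    · simpa [ha] using (hn a ha).trans (le_norm_self _)
    · simp [ha]
  · filter_upwards [h_mem a] with n hn
    simp [hn]

theorem integrable_exp_neg_mul_sum_sq {ι : Type*} [Fintype ι] {b : ℝ} (hb : 0 < b) :
    Integrable (fun z : ι → ℝ => exp (-b * ∑ i, z i ^ 2)) := by
  simp_rw [Finset.mul_sum, exp_sum]
  exact .fintype_prod fun _ => integrable_exp_neg_mul_sq hb

section Rescaling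

variable {E : Type*} [NormedAddCommGroup E] [NormedSpace ℝ E]

theorem tendsto_inv_sqrt_smul_nhds_zero (z : E) :
    Tendsto (fun R : ℝ => (√R)⁻¹ • z) atTop (𝓝 0) := by
  simpa using (tendsto_inv_atTop_zero.comp tendsto_sqrt_atTop).smul_const z

theorem tendsto_mul_comp_inv_sqrt_smul {f Q : E → ℝ} (hQ : ∀ (t : ℝ) z, Q (t • z) = t ^ 2 * Q z)
    {C δ : ℝ} (hδ : 0 < δ) (hC : ∀ z, ‖z‖ ≤ δ → |f z + Q z| ≤ C * ‖z‖ ^ 3) (z : E) :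
    Tendsto (fun R => R * f ((√R)⁻¹ • z)) atTop (𝓝 (-Q z)) := by
  have h_small : ∀ᶠ R : ℝ in atTop, ‖(√R)⁻¹ • z‖ ≤ δ :=
    (tendsto_inv_sqrt_smul_nhds_zero z).norm.eventually (ge_mem_nhds (by simpa using hδ))
  have h_err : ∀ᶠ R : ℝ in atTop, ‖R * f ((√R)⁻¹ • z) - -Q z‖ ≤ C * ‖z‖ ^ 3 / √R := by
    filter_upwards [h_small, eventually_gt_atTop 0] with R hRδ hR
    have hsR : 0 < √R := sqrt_pos.2 hR
    calc ‖R * f ((√R)⁻¹ • z) - -Q z‖ = R * |f ((√R)⁻¹ • z) + Q ((√R)⁻¹ • z)| := by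
          rw [norm_eq_abs, hQ, inv_pow, sq_sqrt hR.le, ← abs_of_pos hR, ← abs_mul, abs_of_pos hR]
          congr 1; field_simp; ring
      _ ≤ R * (C * ‖(√R)⁻¹ • z‖ ^ 3) := by gcongr; exact hC _ hRδ
      _ = C * ‖z‖ ^ 3 / √R := by
          rw [norm_smul, norm_inv, norm_of_nonneg hsR.le]
          field_simp
          rw [pow_succ, sq_sqrt hR.le]; ring
  exact tendsto_iff_norm_sub_tendsto_zero.2 <| squeeze_zero' (.of_forall fun _ => norm_nonneg _)
    h_err (tendsto_const_nhds.div_atTop tendsto_sqrt_atTop)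

theorem tendsto_exp_mul_comp_inv_sqrt_smul_mul {f g Q : E → ℝ} (hg : ContinuousAt g 0)
    (hQ : ∀ (t : ℝ) z, Q (t • z) = t ^ 2 * Q z) {C δ : ℝ} (hδ : 0 < δ)
    (hC : ∀ z, ‖z‖ ≤ δ → |f z + Q z| ≤ C * ‖z‖ ^ 3) (z : E) :
    Tendsto (fun R => exp (R * f ((√R)⁻¹ • z)) * g ((√R)⁻¹ • z)) atTop
      (𝓝 (exp (-Q z) * g 0)) :=
  ((continuous_exp.tendsto _).comp (tendsto_mul_comp_inv_sqrt_smul hQ hδ hC z)).mul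
    (hg.tendsto.comp (tendsto_inv_sqrt_smul_nhds_zero z))

end Rescaling

/-- Laplace-type asymptotics: under a uniform Gaussian domination, the rescaled
integrals of `exp(R f(z/√R)) g(z/√R)` over cubes of side `2ε√R` converge to
`g(0)` times the Gaussian integral `∫ exp(-Q)`. -/
theorem laplace_asymptotics
    (l : ℕ) (lam : Fin l → ℝ)
    (Q : (Fin (2 * l) → ℝ) → ℝ)
    (hQ : ∀ z, Q z = ∑ i : Fin l, (lam i) ^ 2 *
        ((z ⟨2 * i.val, by have := i.isLt; omega⟩) ^ 2 +
         (z ⟨2 * i.val + 1, by have := i.isLt; omega⟩) ^ 2))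
    (f g : (Fin (2 * l) → ℝ) → ℝ) (hf : Continuous f) (hg : Continuous g)
    (c : ℝ) (hgc : g 0 = c)
    (hcubic : ∃ C δ : ℝ, 0 < δ ∧ ∀ z : Fin (2 * l) → ℝ,
        ‖z‖ ≤ δ → |f z + Q z| ≤ C * ‖z‖ ^ 3)
    (ε : ℝ) (hε : 0 < ε)
    (κ : ℝ) (hκ : 0 < κ)
    (hdom : ∀ R : ℝ, 1 ≤ R → ∀ z : Fin (2 * l) → ℝ,
        (∀ i, |z i| ≤ ε * Real.sqrt R) →
        R * f (fun i => z i / Real.sqrt R) ≤ -κ * ∑ i, (z i) ^ 2) :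
    Tendsto (fun R : ℝ =>
        ∫ z in {z : Fin (2 * l) → ℝ | ∀ i, |z i| ≤ ε * Real.sqrt R},
          Real.exp (R * f (fun i => z i / Real.sqrt R)) *
            g (fun i => z i / Real.sqrt R))
      atTop
      (nhds (c * ∫ z : Fin (2 * l) → ℝ, Real.exp (-(Q z)))) := by
  obtain ⟨C, δ, hδ, hC⟩ := hcubic
  obtain ⟨M, hM⟩ := (isCompact_closedBall (0 : Fin (2 * l) → ℝ) ε).exists_bound_of_continuousOn
    hg.continuousOn
  have hQ_hom : ∀ (t : ℝ) z, Q (t • z) = t ^ 2 * Q z := fun t z => by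
    simp only [hQ, Finset.mul_sum, Pi.smul_apply, smul_eq_mul]
    congr! 1; ring
  have h_div : ∀ (a : ℝ) (z : Fin (2 * l) → ℝ), (fun i => z i / a) = a⁻¹ • z := fun a z => by
    ext; simp [div_eq_inv_mul]
  simp only [h_div] at hdom ⊢
  rw [mul_comm c, ← hgc, ← integral_mul_const]
  refine tendsto_setIntegral_of_dominated_of_eventually_mem (fun R => by measurability)
    (fun R => by fun_prop) ?_ ((integrable_exp_neg_mul_sum_sq hκ).const_mul M) ?_
    (tendsto_exp_mul_comp_inv_sqrt_smul_mul hg.continuousAt hQ_hom hδ hC)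
  · filter_upwards [eventually_ge_atTop 1] with R hR z hz
    have hz_norm : ‖z‖ ≤ ε * √R := (pi_norm_le_iff_of_nonneg (by positivity)).2 hz
    rw [norm_mul, norm_of_nonneg (exp_pos _).le, mul_comm]
    refine mul_le_mul (hM _ ?_) (exp_le_exp.2 (hdom R hR z hz)) (exp_pos _).le
      ((norm_nonneg _).trans (hM 0 (by simp [hε.le])))
    rw [mem_closedBall_zero_iff, norm_smul, norm_inv, norm_of_nonneg (by positivity)]
    exact inv_mul_le_of_le_mul₀ (by positivity) (by positivity) (by linarith)
  · intro z
    filter_upwards [(tendsto_sqrt_atTop.const_mul_atTop hε).eventually_ge_atTop ‖z‖] with R hR i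
    exact (norm_le_pi_norm z i).trans hR
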